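/- Let A, B ⊆ {1,…,n}. If A ⊆ B, or B ⊆ A, or A ∩ B = ∅, then the Casimir operators commute: [C_A, C_B] = 0 as operators on ℝ[x_1,…,x_n]. -/

import Mathlib

set_option maxRecDepth 8000


open MvPolynomial Finset

noncomputable section

variable {n : ℕ}

/-- Reflection operator `r_i`. -/
def reflOp (i : Fin n) : Module.End ℝ (MvPolynomial (Fin n) ℝ) :=
  (MvPolynomial.aeval (fun j : Fin n => if j = i then -X i else X j)).toLinearMap

/-- Division by the variable `x_i` (as a linear operator, discarding non-divisible terms). -/
def divXop (i : Fin n) : Module.End ℝ (MvPolynomial (Fin n) ℝ) where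
  toFun p := p.divMonomial (Finsupp.single i 1)
  map_add' p q := by ext m; simp [coeff_divMonomial]
  map_smul' c p := by ext m; simp [coeff_divMonomial]

/-- The `i`-th `Z_2^n` Dunkl operator `T_i = ∂_i + μ_i x_i⁻¹ (1 - r_i)`. -/
def dunklT (μ : Fin n → ℝ) (i : Fin n) : Module.End ℝ (MvPolynomial (Fin n) ℝ) :=
  (pderiv i).toLinearMap + μ i • (divXop i * (1 - reflOp i))

/-- The intermediate Laplace–Dunkl operator `Δ_A = Σ_{i∈A} T_i²`. -/
def lapD (μ : Fin n → ℝ) (A : Finset (Fin n)) : Module.End ℝ (MvPolynomial (Fin n) ℝ) :=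
  ∑ i ∈ A, dunklT μ i ^ 2

/-- Multiplication by `‖x_A‖² = Σ_{i∈A} x_i²`. -/
def mulX2 (A : Finset (Fin n)) : Module.End ℝ (MvPolynomial (Fin n) ℝ) :=
  LinearMap.mulLeft ℝ (∑ i ∈ A, X i ^ 2)

/-- The Euler operator `E_A = Σ_{i∈A} x_i ∂_i`. -/
def eulerOp (A : Finset (Fin n)) : Module.End ℝ (MvPolynomial (Fin n) ℝ) :=
  ∑ i ∈ A, LinearMap.mulLeft ℝ (X i) * (pderiv i).toLinearMap

/-- `γ_A = |A|/2 + Σ_{i∈A} μ_i`. -/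
def gamA (μ : Fin n → ℝ) (A : Finset (Fin n)) : ℝ :=
  (A.card : ℝ) / 2 + ∑ i ∈ A, μ i

/-- The Casimir operator `C_A`. -/
def casOp (μ : Fin n → ℝ) (A : Finset (Fin n)) : Module.End ℝ (MvPolynomial (Fin n) ℝ) :=
  (1 / 4 : ℝ) • ((eulerOp A + gamA μ A • 1) ^ 2 - (2 : ℝ) • (eulerOp A + gamA μ A • 1)
    - mulX2 A * lapD μ A)


lemma endExt {f g : Module.End ℝ (MvPolynomial (Fin n) ℝ)}
    (h : ∀ m : Fin n →₀ ℕ, f (monomial m 1) = g (monomial m 1)) : f = g := by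
  apply LinearMap.ext; intro p
  induction p using MvPolynomial.induction_on' with
  | monomial m a =>
      have : (monomial m a : MvPolynomial (Fin n) ℝ) = a • monomial m 1 := by
        rw [smul_monomial, smul_eq_mul, mul_one]
      rw [this, map_smul, map_smul, h]
  | add p q hp hq => rw [map_add, map_add, hp, hq]

lemma mulX_monomial (i : Fin n) (m : Fin n →₀ ℕ) (a : ℝ) :
    LinearMap.mulLeft ℝ (X i) (monomial m a) = monomial (m + Finsupp.single i 1) a := by
  rw [LinearMap.mulLeft_apply, X, monomial_mul, one_mul, add_comm]

lemma divXop_monomial (i : Fin n) (m : Fin n →₀ ℕ) (a : ℝ) :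
    divXop i (monomial m a)
      = if m i = 0 then 0 else monomial (m - Finsupp.single i 1) a := by
  ext k
  show coeff k ((monomial m a).divMonomial (Finsupp.single i 1)) = _
  rw [coeff_divMonomial]
  by_cases h : m i = 0
  · simp only [h, if_true, coeff_zero, coeff_monomial]
    rw [if_neg]
    intro he
    apply_fun (fun f => f i) at he
    simp at he; omega
  · simp only [h, if_false, coeff_monomial]
    congr 1
    simp only [eq_iff_iff]
    constructor
    · intro he; rw [he, add_tsub_cancel_left]
    · intro he; rw [← he]; ext x
      simp only [Finsupp.tsub_apply, Finsupp.add_apply, Finsupp.single_apply]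
      split <;> rename_i hx
      · subst hx; omega
      · omega

lemma reflOp_monomial (i : Fin n) (m : Fin n →₀ ℕ) (a : ℝ) :
    reflOp i (monomial m a) = ((-1 : ℝ) ^ (m i)) • monomial m a := by
  show (MvPolynomial.aeval _) (monomial m a) = _
  rw [aeval_monomial]
  have key : (m.prod fun j k => (if j = i then -X i else X j : MvPolynomial (Fin n) ℝ) ^ k)
      = ((-1 : MvPolynomial (Fin n) ℝ) ^ (m i)) * m.prod fun j k => (X j) ^ k := by
    rw [Finsupp.prod, Finsupp.prod]
    have h1 : ∀ j ∈ m.support, (if j = i then -X i else X j : MvPolynomial (Fin n) ℝ) ^ m j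
        = ((-1 : MvPolynomial (Fin n) ℝ) ^ (if j = i then m j else 0)) * (X j) ^ m j := by
      intro j _
      by_cases hj : j = i
      · subst hj; simp only [eq_self_iff_true, if_true]; rw [neg_pow (X j : MvPolynomial (Fin n) ℝ)]
      · simp [hj]
    rw [Finset.prod_congr rfl h1, Finset.prod_mul_distrib, Finset.prod_pow_eq_pow_sum,
      Finset.sum_ite_eq' m.support i (fun j => m j)]
    by_cases hi : i ∈ m.support
    · rw [if_pos hi]
    · rw [if_neg hi]
      have : m i = 0 := Finsupp.notMem_support_iff.mp hi
      rw [this]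
  rw [key]
  rw [monomial_eq]
  have : ((-1 : ℝ) ^ (m i)) • (C a * m.prod fun j k => (X j : MvPolynomial (Fin n) ℝ) ^ k)
      = C ((-1 : ℝ) ^ (m i)) * (C a * m.prod fun j k => (X j) ^ k) := by
    rw [smul_eq_C_mul]
  rw [this, map_pow, map_neg, map_one, MvPolynomial.algebraMap_eq]
  exact mul_left_comm _ _ _

/-- Dunkl coefficient. -/
def cf (c : ℝ) (k : ℕ) : ℝ := (k : ℝ) + c * (1 - (-1) ^ k)

lemma cf_zero (c : ℝ) : cf c 0 = 0 := by simp [cf]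

lemma dunklT_monomial (μ : Fin n → ℝ) (i : Fin n) (m : Fin n →₀ ℕ) (a : ℝ) :
    dunklT μ i (monomial m a)
      = cf (μ i) (m i) • monomial (m - Finsupp.single i 1) a := by
  have h1 : dunklT μ i (monomial m a) = (pderiv i) (monomial m a)
      + μ i • divXop i ((monomial m a) - reflOp i (monomial m a)) := by
    simp [dunklT, LinearMap.add_apply, LinearMap.smul_apply, Module.End.mul_apply,
      LinearMap.sub_apply]
  rw [h1, pderiv_monomial, reflOp_monomial]
  by_cases h : m i = 0
  · rw [h]
    simp [cf_zero]
  · have hsub : (monomial m a : MvPolynomial (Fin n) ℝ) - (-1:ℝ)^(m i) • monomial m a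
        = (1 - (-1:ℝ)^(m i)) • monomial m a := by
      rw [sub_smul, one_smul]
    rw [hsub, map_smul, divXop_monomial, if_neg h]
    rw [smul_monomial, smul_monomial, smul_monomial, cf]
    rw [smul_eq_mul, smul_eq_mul, smul_eq_mul, ← map_add]
    congr 1
    push_cast
    ring

lemma dunklT_sq_monomial (μ : Fin n → ℝ) (i : Fin n) (m : Fin n →₀ ℕ) (a : ℝ) :
    (dunklT μ i ^ 2) (monomial m a)
      = (cf (μ i) (m i) * cf (μ i) (m i - 1)) • monomial (m - Finsupp.single i 2) a := by
  have : (dunklT μ i ^ 2) (monomial m a) = dunklT μ i (dunklT μ i (monomial m a)) := by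
    rw [pow_two]; rfl
  rw [this, dunklT_monomial, map_smul, dunklT_monomial, smul_smul]
  congr 2
  · rw [Finsupp.tsub_apply, Finsupp.single_apply, if_pos rfl]
  · rw [tsub_tsub]
    congr 1
    ext x
    simp [Finsupp.single_apply]
    split <;> omega

def opH (i : Fin n) : Module.End ℝ (MvPolynomial (Fin n) ℝ) :=
  LinearMap.mulLeft ℝ (X i) * (pderiv i).toLinearMap

def opP (i : Fin n) : Module.End ℝ (MvPolynomial (Fin n) ℝ) :=
  LinearMap.mulLeft ℝ (X i ^ 2)

lemma opH_monomial (i : Fin n) (m : Fin n →₀ ℕ) (a : ℝ) :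
    opH i (monomial m a) = (m i : ℝ) • monomial m a := by
  rw [opH, Module.End.mul_apply]
  show LinearMap.mulLeft ℝ (X i) ((pderiv i) (monomial m a)) = _
  rw [pderiv_monomial, mulX_monomial, smul_monomial, smul_eq_mul, mul_comm]
  by_cases h : m i = 0
  · rw [h]; simp
  · have he : m - Finsupp.single i 1 + Finsupp.single i 1 = m := by
      ext x
      simp only [Finsupp.add_apply, Finsupp.tsub_apply, Finsupp.single_apply]
      split <;> rename_i hx
      · subst hx; omega
      · omega
    rw [he]

lemma X_sq (i : Fin n) : (X i ^ 2 : MvPolynomial (Fin n) ℝ) = monomial (Finsupp.single i 2) 1 := by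
  rw [X, monomial_pow, Finsupp.smul_single]
  norm_num

lemma opP_monomial (i : Fin n) (m : Fin n →₀ ℕ) (a : ℝ) :
    opP i (monomial m a) = monomial (m + Finsupp.single i 2) a := by
  rw [opP, LinearMap.mulLeft_apply, X_sq, monomial_mul, one_mul, add_comm]

def opT (μ : Fin n → ℝ) (i : Fin n) : Module.End ℝ (MvPolynomial (Fin n) ℝ) :=
  dunklT μ i ^ 2

lemma opT_monomial (μ : Fin n → ℝ) (i : Fin n) (m : Fin n →₀ ℕ) (a : ℝ) :
    opT μ i (monomial m a)
      = (cf (μ i) (m i) * cf (μ i) (m i - 1)) • monomial (m - Finsupp.single i 2) a :=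
  dunklT_sq_monomial μ i m a

lemma apply_add_single_ne {i j : Fin n} (h : i ≠ j) (m : Fin n →₀ ℕ) (c : ℕ) :
    (m + Finsupp.single i c) j = m j := by
  simp [Finsupp.add_apply, Finsupp.single_apply, h]

lemma apply_sub_single_ne {i j : Fin n} (h : i ≠ j) (m : Fin n →₀ ℕ) (c : ℕ) :
    (m - Finsupp.single i c) j = m j := by
  simp [Finsupp.tsub_apply, Finsupp.single_apply, h]

lemma add_single_sub_single {i j : Fin n} (h : i ≠ j) (m : Fin n →₀ ℕ) (c d : ℕ) :
    m + Finsupp.single i c - Finsupp.single j d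
      = m - Finsupp.single j d + Finsupp.single i c := by
  ext x
  simp only [Finsupp.tsub_apply, Finsupp.add_apply, Finsupp.single_apply]
  split <;> split <;> rename_i h1 h2 <;> omega

lemma sub_single_sub_single (i j : Fin n) (m : Fin n →₀ ℕ) (c d : ℕ) :
    m - Finsupp.single i c - Finsupp.single j d
      = m - Finsupp.single j d - Finsupp.single i c := by
  rw [tsub_tsub, tsub_tsub, add_comm]

lemma commute_opH_opH (i j : Fin n) : Commute (opH i) (opH j) := by
  apply endExt; intro m
  simp only [Module.End.mul_apply, opH_monomial, map_smul, smul_smul, mul_comm]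

lemma commute_opH_opP {i j : Fin n} (h : i ≠ j) : Commute (opH i) (opP j) := by
  apply endExt; intro m
  simp only [Module.End.mul_apply, opH_monomial, opP_monomial, map_smul,
    apply_add_single_ne h.symm]

lemma commute_opH_opT (μ : Fin n → ℝ) {i j : Fin n} (h : i ≠ j) :
    Commute (opH i) (opT μ j) := by
  apply endExt; intro m
  simp only [Module.End.mul_apply, opH_monomial, opT_monomial, map_smul, smul_smul,
    apply_sub_single_ne h.symm, mul_comm]

lemma commute_opP_opP (i j : Fin n) : Commute (opP i) (opP j) := by
  apply endExt; intro m
  simp only [Module.End.mul_apply, opP_monomial, add_right_comm]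

lemma commute_opP_opT (μ : Fin n → ℝ) {i j : Fin n} (h : i ≠ j) :
    Commute (opP i) (opT μ j) := by
  apply endExt; intro m
  simp only [Module.End.mul_apply, opP_monomial, opT_monomial, map_smul,
    apply_add_single_ne h, add_single_sub_single h]

lemma commute_opT_opT (μ : Fin n → ℝ) {i j : Fin n} (h : i ≠ j) :
    Commute (opT μ i) (opT μ j) := by
  apply endExt; intro m
  rw [Module.End.mul_apply, Module.End.mul_apply, opT_monomial, opT_monomial,
    map_smul, map_smul, opT_monomial, opT_monomial, smul_smul, smul_smul,
    apply_sub_single_ne h, apply_sub_single_ne h.symm,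
    sub_single_sub_single i j, mul_comm (cf (μ j) (m j) * cf (μ j) (m j - 1))]

lemma cf_rel3 (c : ℝ) (k : ℕ) :
    cf c (k + 2) * cf c (k + 1) - cf c k * cf c (k - 1)
      = 4 * (k : ℝ) + 4 * c + 2 := by
  match k with
  | 0 => norm_num [cf]; ring
  | (j+1) =>
      have h1 : (j + 1) - 1 = j := rfl
      rw [h1, cf, cf, cf, cf]
      push_cast
      simp only [pow_succ]
      ring

lemma cf_rel2 (c : ℝ) (k : ℕ) :
    cf c k * cf c (k - 1) * ((k - 2 : ℕ) : ℝ) - (k : ℝ) * (cf c k * cf c (k - 1))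
      = -(2 * (cf c k * cf c (k - 1))) := by
  match k with
  | 0 => norm_num [cf]
  | 1 => norm_num [cf]
  | (j+2) =>
      have h1 : (j + 2) - 1 = j + 1 := rfl
      have h2 : (j + 2) - 2 = j := rfl
      rw [h1, h2]
      push_cast
      ring

lemma apply_add_single_same (i : Fin n) (m : Fin n →₀ ℕ) (c : ℕ) :
    (m + Finsupp.single i c) i = m i + c := by
  simp [Finsupp.add_apply, Finsupp.single_eq_same]

lemma apply_sub_single_same (i : Fin n) (m : Fin n →₀ ℕ) (c : ℕ) :
    (m - Finsupp.single i c) i = m i - c := by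
  simp [Finsupp.tsub_apply, Finsupp.single_eq_same]

lemma rel1_index (i : Fin n) : opH i * opP i - opP i * opH i = (2 : ℝ) • opP i := by
  apply endExt; intro m
  simp only [LinearMap.sub_apply, Module.End.mul_apply, LinearMap.smul_apply,
    opH_monomial, opP_monomial, map_smul, apply_add_single_same]
  rw [← sub_smul]
  congr 1
  push_cast
  ring

lemma rel2_index (μ : Fin n → ℝ) (i : Fin n) :
    opH i * opT μ i - opT μ i * opH i = -((2 : ℝ) • opT μ i) := by
  apply endExt; intro m
  simp only [LinearMap.sub_apply, Module.End.mul_apply, LinearMap.smul_apply,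
    LinearMap.neg_apply, opH_monomial, opT_monomial, map_smul, apply_sub_single_same,
    smul_smul]
  rw [← sub_smul, ← neg_smul]
  congr 1
  exact cf_rel2 (μ i) (m i)

lemma rel3_index (μ : Fin n → ℝ) (i : Fin n) :
    opT μ i * opP i - opP i * opT μ i
      = (4 : ℝ) • opH i + (4 * μ i + 2) • (1 : Module.End ℝ (MvPolynomial (Fin n) ℝ)) := by
  apply endExt; intro m
  simp only [LinearMap.sub_apply, Module.End.mul_apply, LinearMap.add_apply,
    LinearMap.smul_apply, Module.End.one_apply, opT_monomial, opP_monomial,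
    opH_monomial, map_smul, apply_add_single_same]
  have hb : m i + 2 - 1 = m i + 1 := rfl
  rw [hb, add_tsub_cancel_right, smul_smul]
  by_cases h2 : 2 ≤ m i
  · have he : m - Finsupp.single i 2 + Finsupp.single i 2 = m := by
      apply tsub_add_cancel_of_le
      rw [Finsupp.single_le_iff]; exact h2
    rw [he, ← sub_smul, cf_rel3, ← add_smul]
    congr 1
    ring
  · have hz : cf (μ i) (m i) * cf (μ i) (m i - 1) = 0 := by
      have : m i = 0 ∨ m i = 1 := by omega
      rcases this with h | h <;> rw [h] <;> norm_num [cf]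
    have h3 := cf_rel3 (μ i) (m i)
    rw [hz] at h3 ⊢
    rw [sub_zero] at h3
    rw [zero_smul, sub_zero, h3, ← add_smul]
    congr 1
    ring

lemma sum_commutator {A : Finset (Fin n)}
    {f g h : Fin n → Module.End ℝ (MvPolynomial (Fin n) ℝ)}
    (hcomm : ∀ i ∈ A, ∀ j ∈ A, i ≠ j → Commute (f i) (g j))
    (hrel : ∀ i ∈ A, f i * g i - g i * f i = h i) :
    (∑ i ∈ A, f i) * (∑ j ∈ A, g j) - (∑ j ∈ A, g j) * (∑ i ∈ A, f i)
      = ∑ i ∈ A, h i := by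
  rw [Finset.sum_mul_sum, Finset.sum_mul_sum,
    Finset.sum_comm (s := A) (t := A) (f := fun j i => g j * f i),
    ← Finset.sum_sub_distrib]
  refine Finset.sum_congr rfl fun i hi => ?_
  rw [← Finset.sum_sub_distrib, Finset.sum_eq_single_of_mem i hi]
  · exact hrel i hi
  · intro j hj hne
    exact sub_eq_zero_of_eq (hcomm i hi j hj (fun e => hne e.symm)).eq

lemma eulerOp_eq_sum (A : Finset (Fin n)) : eulerOp A = ∑ i ∈ A, opH i := rfl

lemma lapD_eq_sum (μ : Fin n → ℝ) (A : Finset (Fin n)) :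
    lapD μ A = ∑ i ∈ A, opT μ i := rfl

lemma mulX2_eq_sum (A : Finset (Fin n)) : mulX2 A = ∑ i ∈ A, opP i := by
  apply LinearMap.ext; intro p
  simp [mulX2, opP, LinearMap.mulLeft_apply, LinearMap.sum_apply, Finset.sum_mul]

lemma relEP (A : Finset (Fin n)) :
    eulerOp A * mulX2 A - mulX2 A * eulerOp A = (2 : ℝ) • mulX2 A := by
  rw [eulerOp_eq_sum, mulX2_eq_sum, Finset.smul_sum]
  exact sum_commutator (fun i _ j _ hij => commute_opH_opP hij) (fun i _ => rel1_index i)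

lemma relEQ (μ : Fin n → ℝ) (A : Finset (Fin n)) :
    eulerOp A * lapD μ A - lapD μ A * eulerOp A = -((2 : ℝ) • lapD μ A) := by
  rw [eulerOp_eq_sum, lapD_eq_sum, Finset.smul_sum, ← Finset.sum_neg_distrib]
  exact sum_commutator (fun i _ j _ hij => commute_opH_opT μ hij)
    (fun i _ => rel2_index μ i)

lemma relQP (μ : Fin n → ℝ) (A : Finset (Fin n)) :
    lapD μ A * mulX2 A - mulX2 A * lapD μ A
      = (4 : ℝ) • eulerOp A + (4 * gamA μ A) • 1 := by
  rw [eulerOp_eq_sum, lapD_eq_sum, mulX2_eq_sum]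
  have hsum : ((4 : ℝ) • ∑ i ∈ A, opH i) + (4 * gamA μ A) • (1 : Module.End ℝ (MvPolynomial (Fin n) ℝ))
      = ∑ i ∈ A, ((4 : ℝ) • opH i + (4 * μ i + 2) • 1) := by
    rw [Finset.sum_add_distrib, Finset.smul_sum]
    congr 1
    rw [← Finset.sum_smul]
    congr 1
    rw [gamA, Finset.sum_add_distrib, Finset.sum_const, nsmul_eq_mul]
    push_cast
    rw [mul_add, Finset.mul_sum]
    ring
  rw [hsum]
  exact sum_commutator (fun i _ j _ hij => (commute_opP_opT μ hij.symm).symm)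
    (fun i _ => rel3_index μ i)

lemma casimir_commute {R : Type*} [Ring R] [Algebra ℝ R] (E P Q : R) (γ : ℝ)
    (hEP : E * P - P * E = (2:ℝ) • P) (hEQ : E * Q - Q * E = -((2:ℝ) • Q))
    (hQP : Q * P - P * Q = (4:ℝ) • E + (4 * γ) • (1:R)) :
    Commute ((E + γ • (1:R)) ^ 2 - (2:ℝ) • (E + γ • (1:R)) - P * Q) (E + γ • (1:R)) ∧
    Commute ((E + γ • (1:R)) ^ 2 - (2:ℝ) • (E + γ • (1:R)) - P * Q) P ∧
    Commute ((E + γ • (1:R)) ^ 2 - (2:ℝ) • (E + γ • (1:R)) - P * Q) Q := by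
  set H : R := E + γ • (1:R) with hHdef
  have hc1 : (γ • (1:R)) * P = P * (γ • (1:R)) := by
    rw [smul_mul_assoc, mul_smul_comm, one_mul, mul_one]
  have hc2 : (γ • (1:R)) * Q = Q * (γ • (1:R)) := by
    rw [smul_mul_assoc, mul_smul_comm, one_mul, mul_one]
  have hHP : H * P = P * H + (2:ℝ) • P := by
    rw [hHdef, add_mul, mul_add, hc1, sub_eq_iff_eq_add.mp hEP]; abel
  have hHQ : H * Q = Q * H - (2:ℝ) • Q := by
    rw [hHdef, add_mul, mul_add, hc2, sub_eq_iff_eq_add.mp hEQ]; abel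
  have hQPb : Q * P = P * Q + (4:ℝ) • H := by
    rw [sub_eq_iff_eq_add.mp hQP, hHdef, smul_add, smul_smul]
    abel
  have hHP' : ∀ x : R, H * (P * x) = P * (H * x) + (2:ℝ) • (P * x) := fun x => by
    rw [← mul_assoc, hHP, add_mul, smul_mul_assoc, mul_assoc]
  have hHQ' : ∀ x : R, H * (Q * x) = Q * (H * x) - (2:ℝ) • (Q * x) := fun x => by
    rw [← mul_assoc, hHQ, sub_mul, smul_mul_assoc, mul_assoc]
  have hQP' : ∀ x : R, Q * (P * x) = P * (Q * x) + (4:ℝ) • (H * x) := fun x => by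
    rw [← mul_assoc, hQPb, add_mul, smul_mul_assoc, mul_assoc]
  have hsq : H ^ 2 = H * H := sq H
  refine ⟨?_, ?_, ?_⟩
  · show _ * H = H * _
    simp only [hsq, sub_mul, mul_sub, smul_mul_assoc, mul_smul_comm, mul_assoc,
      hHP, hHP', hHQ, hHQ', hQPb, hQP', mul_add, add_mul, smul_add, smul_sub, smul_smul]
    module
  · show _ * P = P * _
    simp only [hsq, sub_mul, mul_sub, smul_mul_assoc, mul_smul_comm, mul_assoc,
      hHP, hHP', hHQ, hHQ', hQPb, hQP', mul_add, add_mul, smul_add, smul_sub, smul_smul]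
    module
  · show _ * Q = Q * _
    simp only [hsq, sub_mul, mul_sub, smul_mul_assoc, mul_smul_comm, mul_assoc,
      hHP, hHP', hHQ, hHQ', hQPb, hQP', mul_add, add_mul, smul_add, smul_sub, smul_smul]
    module

lemma casOp_commute_self (μ : Fin n → ℝ) (A : Finset (Fin n)) :
    Commute (casOp μ A) (eulerOp A) ∧ Commute (casOp μ A) (mulX2 A) ∧
      Commute (casOp μ A) (lapD μ A) := by
  obtain ⟨h1, h2, h3⟩ := casimir_commute (eulerOp A) (mulX2 A) (lapD μ A) (gamA μ A)
    (relEP A) (relEQ μ A) (relQP μ A)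
  have hγ : Commute ((eulerOp A + gamA μ A • 1) ^ 2 - (2:ℝ) • (eulerOp A + gamA μ A • 1)
      - mulX2 A * lapD μ A) ((gamA μ A) • (1 : Module.End ℝ (MvPolynomial (Fin n) ℝ))) :=
    (Commute.one_right _).smul_right _
  have hE : Commute ((eulerOp A + gamA μ A • 1) ^ 2 - (2:ℝ) • (eulerOp A + gamA μ A • 1)
      - mulX2 A * lapD μ A) (eulerOp A) := by
    have := h1.sub_right hγ
    rwa [add_sub_cancel_right] at this
  exact ⟨hE.smul_left _, h2.smul_left _, h3.smul_left _⟩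

lemma commute_sums {A S : Finset (Fin n)}
    {f g : Fin n → Module.End ℝ (MvPolynomial (Fin n) ℝ)} (h : Disjoint A S)
    (hfg : ∀ i j, i ≠ j → Commute (f i) (g j)) :
    Commute (∑ i ∈ A, f i) (∑ j ∈ S, g j) := by
  refine Commute.sum_right _ _ _ fun j hj => Commute.sum_left _ _ _ fun i hi => ?_
  exact hfg i j (fun e => Finset.disjoint_left.mp h hi (e ▸ hj))

lemma casOp_commute_disjoint (μ : Fin n → ℝ) {A S : Finset (Fin n)} (h : Disjoint A S) :
    Commute (casOp μ A) (eulerOp S) ∧ Commute (casOp μ A) (mulX2 S) ∧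
      Commute (casOp μ A) (lapD μ S) := by
  have kEE : Commute (eulerOp S) (eulerOp A) := by
    rw [eulerOp_eq_sum, eulerOp_eq_sum]
    exact commute_sums h.symm fun i j hij => commute_opH_opH i j
  have kEP : Commute (eulerOp S) (mulX2 A) := by
    rw [eulerOp_eq_sum, mulX2_eq_sum]
    exact commute_sums h.symm fun i j hij => commute_opH_opP hij
  have kEQ : Commute (eulerOp S) (lapD μ A) := by
    rw [eulerOp_eq_sum, lapD_eq_sum]
    exact commute_sums h.symm fun i j hij => commute_opH_opT μ hij
  have kPE : Commute (mulX2 S) (eulerOp A) := by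
    rw [eulerOp_eq_sum, mulX2_eq_sum]
    exact commute_sums h.symm fun i j hij => (commute_opH_opP hij.symm).symm
  have kPP : Commute (mulX2 S) (mulX2 A) := by
    rw [mulX2_eq_sum, mulX2_eq_sum]
    exact commute_sums h.symm fun i j hij => commute_opP_opP i j
  have kPQ : Commute (mulX2 S) (lapD μ A) := by
    rw [mulX2_eq_sum, lapD_eq_sum]
    exact commute_sums h.symm fun i j hij => commute_opP_opT μ hij
  have kQE : Commute (lapD μ S) (eulerOp A) := by
    rw [eulerOp_eq_sum, lapD_eq_sum]
    exact commute_sums h.symm fun i j hij => (commute_opH_opT μ hij.symm).symm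
  have kQP : Commute (lapD μ S) (mulX2 A) := by
    rw [mulX2_eq_sum, lapD_eq_sum]
    exact commute_sums h.symm fun i j hij => (commute_opP_opT μ hij.symm).symm
  have kQQ : Commute (lapD μ S) (lapD μ A) := by
    rw [lapD_eq_sum, lapD_eq_sum]
    exact commute_sums h.symm fun i j hij => commute_opT_opT μ hij
  have build : ∀ x : Module.End ℝ (MvPolynomial (Fin n) ℝ),
      Commute x (eulerOp A) → Commute x (mulX2 A) → Commute x (lapD μ A) →
        Commute x (casOp μ A) := by
    intro x hx1 hx2 hx3
    have hH : Commute x (eulerOp A + gamA μ A • 1) :=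
      hx1.add_right ((Commute.one_right x).smul_right _)
    exact (((hH.pow_right 2).sub_right (hH.smul_right _)).sub_right
      (hx2.mul_right hx3)).smul_right _
  exact ⟨(build _ kEE kEP kEQ).symm, (build _ kPE kPP kPQ).symm,
    (build _ kQE kQP kQQ).symm⟩

lemma casOp_commute_parts (μ : Fin n → ℝ) {A B : Finset (Fin n)}
    (h : A ⊆ B ∨ Disjoint A B) :
    Commute (casOp μ A) (eulerOp B) ∧ Commute (casOp μ A) (mulX2 B) ∧
      Commute (casOp μ A) (lapD μ B) := by
  rcases h with h | h
  · obtain ⟨s1, s2, s3⟩ := casOp_commute_self μ A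
    obtain ⟨d1, d2, d3⟩ := casOp_commute_disjoint μ
      (Finset.sdiff_disjoint (s := A) (t := B)).symm
    refine ⟨?_, ?_, ?_⟩
    · rw [eulerOp_eq_sum, ← Finset.sum_sdiff h]
      exact (d1.add_right s1 : _)
    · rw [mulX2_eq_sum, ← Finset.sum_sdiff h]
      rw [mulX2_eq_sum] at d2 s2
      exact d2.add_right s2
    · rw [lapD_eq_sum, ← Finset.sum_sdiff h]
      rw [lapD_eq_sum] at d3 s3
      exact d3.add_right s3
  · exact casOp_commute_disjoint μ h

lemma casOp_commute_casOp (μ : Fin n → ℝ) {A B : Finset (Fin n)}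
    (h : A ⊆ B ∨ Disjoint A B) : Commute (casOp μ A) (casOp μ B) := by
  obtain ⟨h1, h2, h3⟩ := casOp_commute_parts μ h
  have hH : Commute (casOp μ A) (eulerOp B + gamA μ B • 1) :=
    h1.add_right ((Commute.one_right _).smul_right _)
  exact (((hH.pow_right 2).sub_right (hH.smul_right _)).sub_right
    (h2.mul_right h3)).smul_right _

end


/-- `[C_A, C_B] = 0` whenever `A ⊆ B`, `B ⊆ A`, or `A ∩ B = ∅`. -/
theorem casOp_comm_of_nested_or_disjoint {n : ℕ} (hn : 1 ≤ n) (μ : Fin n → ℝ)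
    (hμ : ∀ i, 0 < μ i) (A B : Finset (Fin n))
    (hAB : A ⊆ B ∨ B ⊆ A ∨ A ∩ B = ∅) :
    casOp μ A * casOp μ B - casOp μ B * casOp μ A = 0 := by
  have key : Commute (casOp μ A) (casOp μ B) := by
    rcases hAB with h | h | h
    · exact casOp_commute_casOp μ (Or.inl h)
    · exact (casOp_commute_casOp μ (Or.inl h)).symm
    · exact casOp_commute_casOp μ (Or.inr (Finset.disjoint_iff_inter_eq_empty.mpr h))
  exact sub_eq_zero_of_eq key.eq
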